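/- arXiv:1403.7643 — 2 statements merged into one kernel-verified Lean document; each statement's English description precedes it below -/
import Mathlib

section
/- Let μ₁ be a measure on ℝ with density φ non-decreasing on (-∞,0] and non-increasing on [0,∞), let μ₂ be any measure on ℝ^{n-1} with μ₂(ℝ^{n-1}) < ∞, and let μ = μ₁ ⊗ μ₂. Let A = A₁ × ℝ^{n-1} with A₁ ⊂ ℝ Borel, and let B ⊂ ℝⁿ be Borel with 0 ∈ A ∩ B. Then for every λ ∈ [0,1], μ((1-λ)A + λB) ≥ (1-λ)μ(A) + λμ(B). -/
/-!
For `l = 1` there is nothing to prove. Otherwise, with `B₁` the projection of `B` to the first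
coordinate, `(1 - l) • A + l • B` is the cylinder over `(1 - l) • A₁ + l • B₁` while
`μ B ≤ μ₁ B₁ · μ₂ univ`, so it suffices to prove the inequality for `μ₁`, `A₁` and `B₁`.
By the layer-cake formula `μ₁ E = ∫_{r > 0} |E ∩ {φ > r}| dr`, and each superlevel set
`K = {φ > r}` of the unimodal density is an interval containing `0`. Hence
`(1 - l) • (A₁ ∩ K) + l • (B₁ ∩ K) ⊆ K ∩ ((1 - l) • A₁ + l • B₁)`, and the one-dimensional
Brunn–Minkowski inequality `|C| + |D| ≤ |C + D|` gives the claim level by level. The projection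
`B₁` need not be measurable, so Brunn–Minkowski is proved with only one of the two sets measurable.
-/

open MeasureTheory Set Pointwise

theorem measure_le_measure_add_left {G : Type*} [MeasurableSpace G] [AddGroup G]
    (μ : Measure G) [μ.IsAddLeftInvariant] {s : Set G} (hs : s.Nonempty) (t : Set G) :
    μ t ≤ μ (s + t) := by
  obtain ⟨a, ha⟩ := hs
  calc μ t = μ (a +ᵥ t) := (measure_vadd μ a t).symm
    _ ≤ μ (s + t) := measure_mono (vadd_set_subset_add ha)

namespace Real

theorem volume_add_volume_le_volume_add_of_isGreatest {s t : Set ℝ} {c : ℝ}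
    (hs : MeasurableSet s) (hc : IsGreatest s c) (ht : t.Nonempty) (ht_bdd : BddBelow t) :
    volume s + volume t ≤ volume (s + t) := by
  refine ENNReal.le_of_forall_pos_le_add fun ε hε _ => ?_
  obtain ⟨d, hd, hdε⟩ :=
    exists_lt_of_csInf_lt ht (lt_add_of_pos_right (sInf t) (NNReal.coe_pos.2 hε))
  -- the translates `d +ᵥ s ≤ c + d` and `c +ᵥ t ≥ c + sInf t` of `s` and `t` lie in `s + t`
  -- and overlap in a set of length `< ε`
  have h_inter : (d +ᵥ s) ∩ (c +ᵥ t) ⊆ Icc (c + sInf t) (c + d) := by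
    rintro _ ⟨⟨a, ha, rfl⟩, ⟨b, hb, hab⟩⟩
    simp only [vadd_eq_add] at hab ⊢
    constructor <;> linarith [csInf_le ht_bdd hb, hc.2 ha]
  have h_small : volume ((d +ᵥ s) ∩ (c +ᵥ t)) ≤ ε := by
    refine (measure_mono h_inter).trans ?_
    rw [volume_Icc, ← ENNReal.ofReal_coe_nnreal]
    exact ENNReal.ofReal_le_ofReal (by linarith)
  calc volume s + volume t = volume (d +ᵥ s) + volume (c +ᵥ t) := by
        rw [measure_vadd, measure_vadd]
    _ = volume ((d +ᵥ s) ∪ (c +ᵥ t)) + volume ((d +ᵥ s) ∩ (c +ᵥ t)) :=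
        (measure_union_add_inter' (hs.const_vadd d) _).symm
    _ ≤ volume (s + t) + ε := by
        gcongr
        refine union_subset ?_ (vadd_set_subset_add hc.1)
        rw [add_comm]
        exact vadd_set_subset_add hd

theorem _root_.IsCompact.volume_add_volume_le_volume_add {s t : Set ℝ} (hs : IsCompact s)
    (hs_ne : s.Nonempty) (ht : t.Nonempty) :
    volume s + volume t ≤ volume (s + t) := by
  obtain ⟨c, hc⟩ := hs.exists_isGreatest hs_ne
  obtain ⟨d, hd⟩ := ht
  have h_mono : Monotone fun n : ℕ => t ∩ Ici (d - n) := fun m n hmn =>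
    inter_subset_inter_right t (Ici_subset_Ici.2 (by gcongr))
  have h_union : ⋃ n : ℕ, t ∩ Ici (d - n) = t := by
    refine (iUnion_subset fun n => inter_subset_left).antisymm fun x hx => mem_iUnion.2 ?_
    obtain ⟨n, hn⟩ := exists_nat_ge (d - x)
    exact ⟨n, hx, by simp only [mem_Ici]; linarith⟩
  calc volume s + volume t = ⨆ n : ℕ, volume s + volume (t ∩ Ici (d - n)) := by
        rw [← ENNReal.add_iSup, ← h_mono.measure_iUnion, h_union]
    _ ≤ volume (s + t) := iSup_le fun n =>
        (volume_add_volume_le_volume_add_of_isGreatest (t := t ∩ Ici (d - n)) hs.measurableSet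
          hc ⟨d, hd, by simp⟩ (bddBelow_Ici.mono inter_subset_right)).trans
        (measure_mono (add_subset_add_left inter_subset_left))

theorem volume_add_volume_le_volume_add {s t : Set ℝ} (hs : MeasurableSet s)
    (hs_ne : s.Nonempty) (ht : t.Nonempty) :
    volume s + volume t ≤ volume (s + t) := by
  rw [hs.measure_eq_iSup_isCompact]
  simp only [iSup_and']
  rw [ENNReal.biSup_add' ⟨∅, empty_subset s, isCompact_empty⟩]
  refine iSup₂_le fun K ⟨hKs, hK⟩ => ?_
  rcases K.eq_empty_or_nonempty with rfl | hK_ne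
  · simpa using measure_le_measure_add_left volume hs_ne t
  · exact (hK.volume_add_volume_le_volume_add hK_ne ht).trans
      (measure_mono (add_subset_add_right hKs))

theorem ofReal_mul_volume_add_le_volume_smul_add_smul {a b : ℝ} (ha : 0 < a) (hb : 0 ≤ b)
    {s t : Set ℝ} (hs : MeasurableSet s) (hs_ne : s.Nonempty) (ht : t.Nonempty) :
    ENNReal.ofReal a * volume s + ENNReal.ofReal b * volume t ≤ volume (a • s + b • t) := by
  have h_smul : ∀ (r : ℝ) (u : Set ℝ), 0 ≤ r → volume (r • u) = ENNReal.ofReal r * volume u :=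
    fun r u hr => by simp [Measure.addHaar_smul, abs_of_nonneg hr]
  rw [← h_smul a s ha.le, ← h_smul b t hb]
  exact volume_add_volume_le_volume_add (hs.const_smul₀ a) hs_ne.smul_set ht.smul_set

end Real

def UnimodalAt (φ : ℝ → ℝ) (c : ℝ) : Prop :=
  MonotoneOn φ (Iic c) ∧ AntitoneOn φ (Ici c)

namespace UnimodalAt

variable {φ : ℝ → ℝ} {c : ℝ}

theorem apply_le (h : UnimodalAt φ c) (x : ℝ) : φ x ≤ φ c := by
  rcases le_total x c with hx | hx
  · exact h.1 hx (mem_Iic.2 le_rfl) hx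
  · exact h.2 (mem_Ici.2 le_rfl) hx hx

theorem ordConnected_setOf_lt (h : UnimodalAt φ c) (t : ℝ) : {x | t < φ x}.OrdConnected := by
  refine ⟨fun a ha b hb x ⟨hax, hxb⟩ => ?_⟩
  rcases le_total x c with hx | hx
  · exact ha.trans_le (h.1 (hax.trans hx) hx hax)
  · exact hb.trans_le (h.2 hx (hx.trans hxb) hxb)

theorem measurable (h : UnimodalAt φ c) : Measurable φ :=
  measurable_of_Ioi fun t => (h.ordConnected_setOf_lt t).measurableSet

end UnimodalAt

theorem withDensity_ofReal_apply_eq_lintegral_measure_inter {α : Type*} [MeasurableSpace α]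
    (μ : Measure α) [SFinite μ] {f : α → ℝ} (hf : Measurable f) (hf_nonneg : ∀ x, 0 ≤ f x)
    (s : Set α) :
    μ.withDensity (fun x => ENNReal.ofReal (f x)) s
      = ∫⁻ t in Ioi 0, μ ({x | t < f x} ∩ s) := by
  rw [withDensity_apply',
    lintegral_eq_lintegral_meas_lt _ (ae_of_all _ hf_nonneg) hf.aemeasurable]
  simp only [Measure.restrict_apply (measurableSet_lt measurable_const hf)]

theorem UnimodalAt.ofReal_mul_measure_add_le_measure_smul_add_smul {φ : ℝ → ℝ}
    (hφ : UnimodalAt φ 0) (hφ_nonneg : ∀ x, 0 ≤ φ x) {μ : Measure ℝ}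
    (hμ : μ = volume.withDensity fun x => ENNReal.ofReal (φ x)) {a b : ℝ} (ha : 0 < a)
    (hb : 0 ≤ b) (hab : a + b = 1) {s t : Set ℝ} (hs : MeasurableSet s) (hs₀ : (0 : ℝ) ∈ s)
    (ht₀ : (0 : ℝ) ∈ t) :
    ENNReal.ofReal a * μ s + ENNReal.ofReal b * μ t ≤ μ (a • s + b • t) := by
  have h_layer : ∀ u, μ u = ∫⁻ r in Ioi 0, volume ({x | r < φ x} ∩ u) := fun u => by
    rw [hμ, withDensity_ofReal_apply_eq_lintegral_measure_inter volume hφ.measurable hφ_nonneg]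
  have h_level : ∀ r : ℝ, let K := {x | r < φ x}
      ENNReal.ofReal a * volume (K ∩ s) + ENNReal.ofReal b * volume (K ∩ t)
        ≤ volume (K ∩ (a • s + b • t)) := by
    intro r K
    rcases K.eq_empty_or_nonempty with hK | ⟨x, hx⟩
    · simp [hK]
    have hK₀ : (0 : ℝ) ∈ K := hx.trans_le (hφ.apply_le x)
    have hK_convex : Convex ℝ K := (hφ.ordConnected_setOf_lt r).convex
    calc ENNReal.ofReal a * volume (K ∩ s) + ENNReal.ofReal b * volume (K ∩ t)
        ≤ volume (a • (K ∩ s) + b • (K ∩ t)) :=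
          Real.ofReal_mul_volume_add_le_volume_smul_add_smul ha hb
            ((hφ.ordConnected_setOf_lt r).measurableSet.inter hs) ⟨0, hK₀, hs₀⟩ ⟨0, hK₀, ht₀⟩
      _ ≤ volume (K ∩ (a • s + b • t)) := by
          refine measure_mono (subset_inter ?_ ?_)
          · exact (add_subset_add (smul_set_mono inter_subset_left)
              (smul_set_mono inter_subset_left)).trans
              (hK_convex.set_combo_subset ha.le hb hab)
          · exact add_subset_add (smul_set_mono inter_subset_right)
              (smul_set_mono inter_subset_right)
  calc ENNReal.ofReal a * μ s + ENNReal.ofReal b * μ t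
      = (∫⁻ r in Ioi 0, ENNReal.ofReal a * volume ({x | r < φ x} ∩ s))
          + ∫⁻ r in Ioi 0, ENNReal.ofReal b * volume ({x | r < φ x} ∩ t) := by
        rw [h_layer, h_layer, lintegral_const_mul' _ _ ENNReal.ofReal_ne_top,
          lintegral_const_mul' _ _ ENNReal.ofReal_ne_top]
    _ ≤ ∫⁻ r in Ioi 0, (ENNReal.ofReal a * volume ({x | r < φ x} ∩ s)
          + ENNReal.ofReal b * volume ({x | r < φ x} ∩ t)) := le_lintegral_add _ _
    _ ≤ ∫⁻ r in Ioi 0, volume ({x | r < φ x} ∩ (a • s + b • t)) :=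
        lintegral_mono fun r => h_level r
    _ = μ (a • s + b • t) := (h_layer _).symm

theorem Set.prod_univ_add {E F : Type*} [AddGroup E] [AddGroup F] (s : Set E)
    (t : Set (E × F)) :
    s ×ˢ (univ : Set F) + t = (s + Prod.fst '' t) ×ˢ univ := by
  ext ⟨x, y⟩
  constructor
  · rintro ⟨p, ⟨hp, -⟩, q, hq, hpq⟩
    rw [← hpq]
    exact ⟨add_mem_add hp (mem_image_of_mem _ hq), trivial⟩
  · rintro ⟨⟨a, ha, _, ⟨q, hq, rfl⟩, rfl⟩, -⟩
    exact ⟨(a, y - q.2), ⟨ha, trivial⟩, q, hq, by ext <;> simp⟩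

theorem stmt6_general (m : ℕ) (φ : ℝ → ℝ) (hφpos : ∀ x, 0 ≤ φ x)
    (hφmono : MonotoneOn φ (Set.Iic 0)) (hφanti : AntitoneOn φ (Set.Ici 0))
    (μ₁ : Measure ℝ) (hμ₁ : μ₁ = volume.withDensity (fun x => ENNReal.ofReal (φ x)))
    (μ₂ : Measure (Fin m → ℝ)) [IsFiniteMeasure μ₂]
    (μ : Measure (ℝ × (Fin m → ℝ))) (hμ : μ = μ₁.prod μ₂)
    (A₁ : Set ℝ) (hA₁ : MeasurableSet A₁)
    (A : Set (ℝ × (Fin m → ℝ))) (hA : A = A₁ ×ˢ (Set.univ : Set (Fin m → ℝ)))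
    (B : Set (ℝ × (Fin m → ℝ)))
    (h0A : (0 : ℝ × (Fin m → ℝ)) ∈ A) (h0B : (0 : ℝ × (Fin m → ℝ)) ∈ B)
    (l : ℝ) (hl : l ∈ Set.Icc (0:ℝ) 1) :
    μ ((1 - l) • A + l • B) ≥
      ENNReal.ofReal (1 - l) * μ A + ENNReal.ofReal l * μ B := by
  obtain ⟨hl0, hl1⟩ := hl
  rcases hl1.eq_or_lt with rfl | hl1
  · simp [zero_smul_set ⟨0, h0A⟩]
  subst hμ hA
  set B₁ := Prod.fst '' B
  have h_sum : (1 - l) • A₁ ×ˢ univ + l • B = ((1 - l) • A₁ + l • B₁) ×ˢ univ := by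
    rw [smul_set_prod, smul_set_univ₀ (sub_ne_zero.2 hl1.ne'), prod_univ_add,
      image_smul_comm Prod.fst l B fun _ => rfl]
  have hμB : μ₁.prod μ₂ B ≤ μ₁ B₁ * μ₂ univ :=
    (measure_mono (fun p hp => ⟨mem_image_of_mem _ hp, trivial⟩ : B ⊆ B₁ ×ˢ univ)).trans
      (Measure.prod_prod_le _ _)
  have h_one_dim : ENNReal.ofReal (1 - l) * μ₁ A₁ + ENNReal.ofReal l * μ₁ B₁
      ≤ μ₁ ((1 - l) • A₁ + l • B₁) :=
    UnimodalAt.ofReal_mul_measure_add_le_measure_smul_add_smul ⟨hφmono, hφanti⟩ hφpos hμ₁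
      (sub_pos.2 hl1) hl0 (sub_add_cancel 1 l) hA₁ h0A.1 ⟨0, h0B, rfl⟩
  rw [ge_iff_le]
  calc ENNReal.ofReal (1 - l) * μ₁.prod μ₂ (A₁ ×ˢ univ) + ENNReal.ofReal l * μ₁.prod μ₂ B
      ≤ (ENNReal.ofReal (1 - l) * μ₁ A₁ + ENNReal.ofReal l * μ₁ B₁) * μ₂ univ := by
        rw [Measure.prod_prod, add_mul, mul_assoc, mul_assoc]
        gcongr
    _ ≤ μ₁ ((1 - l) • A₁ + l • B₁) * μ₂ univ := by gcongr
    _ = μ₁.prod μ₂ ((1 - l) • A₁ ×ˢ univ + l • B) := by rw [h_sum, Measure.prod_prod]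

/-- μ = μ₁ ⊗ μ₂ with μ₁ having a unimodal density with mode 0 on ℝ and μ₂
a finite measure on ℝ^{n-1}; A = A₁ × ℝ^{n-1} and B Borel with 0 ∈ A ∩ B; then
μ((1-l)A + lB) ≥ (1-l)μ(A) + lμ(B). -/
theorem stmt6 (m : ℕ) (φ : ℝ → ℝ) (hφmeas : Measurable φ) (hφpos : ∀ x, 0 ≤ φ x)
    (hφmono : MonotoneOn φ (Set.Iic 0)) (hφanti : AntitoneOn φ (Set.Ici 0))
    (μ₁ : Measure ℝ) (hμ₁ : μ₁ = volume.withDensity (fun x => ENNReal.ofReal (φ x)))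
    (μ₂ : Measure (Fin m → ℝ)) [IsFiniteMeasure μ₂]
    (μ : Measure (ℝ × (Fin m → ℝ))) (hμ : μ = μ₁.prod μ₂)
    (A₁ : Set ℝ) (hA₁ : MeasurableSet A₁)
    (A : Set (ℝ × (Fin m → ℝ))) (hA : A = A₁ ×ˢ (Set.univ : Set (Fin m → ℝ)))
    (B : Set (ℝ × (Fin m → ℝ))) (hB : MeasurableSet B)
    (h0A : (0 : ℝ × (Fin m → ℝ)) ∈ A) (h0B : (0 : ℝ × (Fin m → ℝ)) ∈ B)
    (l : ℝ) (hl : l ∈ Set.Icc (0:ℝ) 1) :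
    μ ((1 - l) • A + l • B) ≥
      ENNReal.ofReal (1 - l) * μ A + ENNReal.ofReal l * μ B :=
  stmt6_general m φ hφpos hφmono hφanti μ₁ hμ₁ μ₂ μ hμ A₁ hA₁ A hA B h0A h0B l hl
end

section
/- Let φ : ℝ → ℝ₊ be integrable, non-decreasing on (-∞,0] and non-increasing on [0,∞), and let μ have density φ. Then for all intervals A = [-a₁, a₂] and B = [-b₁, b₂] with a₁,a₂,b₁,b₂ ≥ 0 and every λ ∈ [0,1], μ((1-λ)A + λB) ≥ (1-λ)μ(A) + λμ(B). -/
/-!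
The mass of `[-c₁, c₂]` is `G c₁ + F c₂` with `F c = ∫₀ᶜ φ` and `G c = ∫₀ᶜ φ(-x)`. Both
integrands are non-increasing on `[0, ∞)`, so `F` and `G` are concave. Hence the mass is jointly
concave in `(c₁, c₂)`, and `(1 - λ)A + λB` is the interval whose endpoints are
the convex combinations of those of `A` and `B`.
-/

open MeasureTheory Set Pointwise intervalIntegral

section SmulIcc

variable {K : Type*} [Field K] [LinearOrder K] [IsStrictOrderedRing K]

lemma smul_Icc_of_nonneg {r a b : K} (hr : 0 ≤ r) (hab : a ≤ b) :
    r • Icc a b = Icc (r * a) (r * b) := by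
  rcases hr.lt_or_eq with hr | rfl
  · exact LinearOrderedField.smul_Icc hr
  · simp [zero_smul_set (nonempty_Icc.2 hab), singleton_zero]

lemma smul_Icc_add_smul_Icc {s t a b c d : K} (hs : 0 ≤ s) (ht : 0 ≤ t) (hab : a ≤ b)
    (hcd : c ≤ d) : s • Icc a b + t • Icc c d = Icc (s * a + t * c) (s * b + t * d) := by
  rw [smul_Icc_of_nonneg hs hab, smul_Icc_of_nonneg ht hcd,
    Icc_add_Icc (mul_le_mul_of_nonneg_left hab hs) (mul_le_mul_of_nonneg_left hcd ht)]

end SmulIcc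

section Antitone

variable {φ : ℝ → ℝ} {a x y z : ℝ}

lemma AntitoneOn.integral_le_sub_mul (hφ : AntitoneOn φ (Icc y z)) (hyz : y ≤ z) :
    ∫ t in y..z, φ t ≤ (z - y) * φ y := by
  calc ∫ t in y..z, φ t ≤ ∫ _ in y..z, φ y :=
        integral_mono_on hyz (AntitoneOn.intervalIntegrable (by rwa [uIcc_of_le hyz]))
          intervalIntegrable_const fun t ht => hφ (left_mem_Icc.2 hyz) ht ht.1
    _ = (z - y) * φ y := by rw [intervalIntegral.integral_const, smul_eq_mul]

lemma AntitoneOn.sub_mul_le_integral (hφ : AntitoneOn φ (Icc x y)) (hxy : x ≤ y) :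
    (y - x) * φ y ≤ ∫ t in x..y, φ t := by
  calc (y - x) * φ y = ∫ _ in x..y, φ y := by rw [intervalIntegral.integral_const, smul_eq_mul]
    _ ≤ ∫ t in x..y, φ t :=
        integral_mono_on hxy intervalIntegrable_const
          (AntitoneOn.intervalIntegrable (by rwa [uIcc_of_le hxy])) fun t ht =>
            hφ ht (right_mem_Icc.2 hxy) ht.2

/-- The slope of `c ↦ ∫ₐᶜ φ` on `[x, y]` is an average of `φ` over `[x, y]`, hence at least `φ y`,
and on `[y, z]` at most `φ y`. -/
theorem AntitoneOn.concaveOn_integral (hφ : AntitoneOn φ (Ici a)) :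
    ConcaveOn ℝ (Ici a) fun c => ∫ t in a..c, φ t := by
  have hint : ∀ {u v}, a ≤ u → u ≤ v → IntervalIntegrable φ volume u v := fun hu huv =>
    (hφ.mono fun t ht => hu.trans (uIcc_of_le huv ▸ ht).1).intervalIntegrable
  refine concaveOn_of_slope_anti_adjacent (convex_Ici a) fun {x y z} hx hz hxy hyz => ?_
  have hy : a ≤ y := le_trans hx hxy.le
  rw [integral_interval_sub_left (hint le_rfl hz) (hint le_rfl hy),
    integral_interval_sub_left (hint le_rfl hy) (hint le_rfl hx)]
  calc (∫ t in y..z, φ t) / (z - y) ≤ φ y := by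
        rw [div_le_iff₀ (sub_pos.2 hyz), mul_comm]
        exact (hφ.mono fun t ht => hy.trans ht.1).integral_le_sub_mul hyz.le
    _ ≤ (∫ t in x..y, φ t) / (y - x) := by
        rw [le_div_iff₀ (sub_pos.2 hxy), mul_comm]
        exact (hφ.mono fun t ht => hx.trans ht.1).sub_mul_le_integral hxy.le

end Antitone

section Unimodal

variable {φ : ℝ → ℝ} (hmono : MonotoneOn φ (Iic 0)) (hanti : AntitoneOn φ (Ici 0))
include hmono hanti

lemma intervalIntegrable_of_unimodal {u v : ℝ} (hu : u ≤ 0) (hv : 0 ≤ v) :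
    IntervalIntegrable φ volume u v :=
  ((hmono.mono fun _ ht => (uIcc_of_le hu ▸ ht).2).intervalIntegrable).trans
    ((hanti.mono fun _ ht => (uIcc_of_le hv ▸ ht).1).intervalIntegrable)

theorem concaveOn_integral_neg_fst_snd_of_unimodal :
    ConcaveOn ℝ (Ici 0 ×ˢ Ici 0) fun c : ℝ × ℝ => ∫ t in -c.1..c.2, φ t := by
  have hneg : AntitoneOn (fun t => φ (-t)) (Ici 0) := fun s hs t ht hst =>
    hmono (mem_Iic.2 (neg_nonpos.2 ht)) (mem_Iic.2 (neg_nonpos.2 hs)) (neg_le_neg hst)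
  have hs : Convex ℝ (Ici (0:ℝ) ×ˢ Ici (0:ℝ)) := (convex_Ici 0).prod (convex_Ici 0)
  refine (((hneg.concaveOn_integral.comp_linearMap (LinearMap.fst ℝ ℝ ℝ)).subset
      (fun c hc => hc.1) hs).add
    ((hanti.concaveOn_integral.comp_linearMap (LinearMap.snd ℝ ℝ ℝ)).subset
      (fun c hc => hc.2) hs)).congr fun c hc => ?_
  simp only [Pi.add_apply, Function.comp_apply, LinearMap.fst_apply, LinearMap.snd_apply,
    integral_comp_neg, neg_zero]
  exact integral_add_adjacent_intervals
    (intervalIntegrable_of_unimodal hmono hanti (neg_nonpos.2 hc.1) le_rfl)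
    (intervalIntegrable_of_unimodal hmono hanti le_rfl hc.2)

end Unimodal

lemma withDensity_ofReal_Icc {φ : ℝ → ℝ} (hpos : ∀ x, 0 ≤ φ x) {u v : ℝ} (huv : u ≤ v)
    (hφ : IntervalIntegrable φ volume u v) :
    volume.withDensity (fun x => ENNReal.ofReal (φ x)) (Icc u v)
      = ENNReal.ofReal (∫ x in u..v, φ x) := by
  rw [withDensity_apply _ measurableSet_Icc, integral_of_le huv, ← integral_Icc_eq_integral_Ioc,
    ofReal_integral_eq_lintegral_ofReal ((intervalIntegrable_iff_integrableOn_Icc_of_le huv).1 hφ)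
      (ae_of_all _ hpos)]

theorem stmt17_general (φ : ℝ → ℝ) (hφpos : ∀ x, 0 ≤ φ x)
    (hφmono : MonotoneOn φ (Set.Iic 0)) (hφanti : AntitoneOn φ (Set.Ici 0))
    (μ : Measure ℝ) (hμ : μ = volume.withDensity (fun x => ENNReal.ofReal (φ x)))
    (a₁ a₂ b₁ b₂ : ℝ) (ha₁ : 0 ≤ a₁) (ha₂ : 0 ≤ a₂) (hb₁ : 0 ≤ b₁) (hb₂ : 0 ≤ b₂)
    (A B : Set ℝ) (hA : A = Set.Icc (-a₁) a₂) (hB : B = Set.Icc (-b₁) b₂)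
    (l : ℝ) (hl : l ∈ Set.Icc (0:ℝ) 1) :
    μ ((1 - l) • A + l • B) ≥
      ENNReal.ofReal (1 - l) * μ A + ENNReal.ofReal l * μ B := by
  have hl₀ : 0 ≤ l := hl.1
  have hl₁ : 0 ≤ 1 - l := sub_nonneg.2 hl.2
  subst hμ hA hB
  have hmass : ∀ {c₁ c₂ : ℝ}, 0 ≤ c₁ → 0 ≤ c₂ →
      volume.withDensity (fun x => ENNReal.ofReal (φ x)) (Icc (-c₁) c₂)
        = ENNReal.ofReal (∫ x in -c₁..c₂, φ x) := fun h₁ h₂ =>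
    withDensity_ofReal_Icc hφpos (by linarith)
      (intervalIntegrable_of_unimodal hφmono hφanti (neg_nonpos.2 h₁) h₂)
  have hnonneg : ∀ {c₁ c₂ : ℝ}, 0 ≤ c₁ → 0 ≤ c₂ → 0 ≤ ∫ x in -c₁..c₂, φ x := fun h₁ h₂ =>
    integral_nonneg (by linarith) fun x _ => hφpos x
  have hconc := (concaveOn_integral_neg_fst_snd_of_unimodal hφmono hφanti).2
    (x := (a₁, a₂)) (y := (b₁, b₂)) ⟨ha₁, ha₂⟩ ⟨hb₁, hb₂⟩ hl₁ hl₀ (sub_add_cancel 1 l)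
  simp only [Prod.smul_mk, Prod.mk_add_mk, smul_eq_mul] at hconc
  rw [smul_Icc_add_smul_Icc hl₁ hl₀ (by linarith) (by linarith), mul_neg, mul_neg,
    ← neg_add, hmass (by positivity) (by positivity), hmass ha₁ ha₂, hmass hb₁ hb₂,
    ← ENNReal.ofReal_mul hl₁, ← ENNReal.ofReal_mul hl₀,
    ← ENNReal.ofReal_add (mul_nonneg hl₁ (hnonneg ha₁ ha₂)) (mul_nonneg hl₀ (hnonneg hb₁ hb₂))]
  exact ENNReal.ofReal_le_ofReal hconc

/-- for an integrable unimodal density φ with mode 0 on ℝ and intervals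
A = [-a₁,a₂], B = [-b₁,b₂] (aᵢ, bᵢ ≥ 0), μ((1-l)A + lB) ≥ (1-l)μ(A) + lμ(B). -/
theorem stmt17 (φ : ℝ → ℝ) (hφint : Integrable φ) (hφpos : ∀ x, 0 ≤ φ x)
    (hφmono : MonotoneOn φ (Set.Iic 0)) (hφanti : AntitoneOn φ (Set.Ici 0))
    (μ : Measure ℝ) (hμ : μ = volume.withDensity (fun x => ENNReal.ofReal (φ x)))
    (a₁ a₂ b₁ b₂ : ℝ) (ha₁ : 0 ≤ a₁) (ha₂ : 0 ≤ a₂) (hb₁ : 0 ≤ b₁) (hb₂ : 0 ≤ b₂)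
    (A B : Set ℝ) (hA : A = Set.Icc (-a₁) a₂) (hB : B = Set.Icc (-b₁) b₂)
    (l : ℝ) (hl : l ∈ Set.Icc (0:ℝ) 1) :
    μ ((1 - l) • A + l • B) ≥
      ENNReal.ofReal (1 - l) * μ A + ENNReal.ofReal l * μ B :=
  stmt17_general φ hφpos hφmono hφanti μ hμ a₁ a₂ b₁ b₂ ha₁ ha₂ hb₁ hb₂ A B hA hB l hl
end
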